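/- Let (V,d) be a finite metric space, t ≥ 1 an integer, and let F, F* ⊆ V be nonempty sets with |F| = |F*| = k. Suppose F is t-swap locally optimal for the ℓ_p objective, i.e., for every R ⊆ F and A ⊆ V with |R| = |A| ≤ t we have Φ_p((F \ R) ∪ A) ≥ Φ_p(F). Then: (1) for p = 1, Φ_1(F) ≤ (3 + 2/t)·Φ_1(F*); (2) for p = 2, Φ_2(F) ≤ (5 + 4/t)·Φ_2(F*); (3) for every real p ≥ 2, Φ_p(F) ≤ (3 + 2/t)·p·Φ_p(F*). -/

import Mathlib

/-!
Compare a `t`-swap local optimum `F` with any `F*` of no larger size, writing `d = d(·,F)` and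
`d* = d(·,F*)`. In a swap, a client whose optimal facility is opened moves there, and a client of a
closed facility is rerouted to the facility of `F` nearest to its optimal facility, at distance at
most `2 d* + d`. Group `F*` by the nearest facility of `F` and pad each group with facilities of `F`
that are nobody's nearest: a group of size at most `t` is swapped at once, a larger one through
single swaps, which costs the factor `λ = 1 + 1/t`. Adding up the local-optimality inequalities
gives `(1 + λ) Σ d^p ≤ Σ d*^p + λ Σ (2 d* + d)^p`, and Minkowski's inequality turns it into
`(1 + λ) Φ^p ≤ Φ*^p + λ (2 Φ* + Φ)^p`. This is linear for `p = 1` and quadratic for `p = 2`; for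
`p ≥ 2` it forces `Φ ≤ (2λ + 1) p Φ*` because `(1 + s/p)^p ≤ e^s`.
-/
open Finset

/-- Distance from a client `j` to a nonempty facility set `F`: `min_{f ∈ F} d(j,f)`. -/
noncomputable def distSet {V : Type*} [MetricSpace V] (j : V) (F : Finset V)
    (hF : F.Nonempty) : ℝ :=
  F.inf' hF fun f => dist j f

/-- The ℓ_p-norm cost of a nonempty facility set `F`:
`Φ_p(F) = (∑_{j ∈ V} d(j,F)^p)^{1/p}`. -/
noncomputable def phiP {V : Type*} [MetricSpace V] [Fintype V] (p : ℝ) (F : Finset V)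
    (hF : F.Nonempty) : ℝ :=
  (∑ j : V, distSet j F hF ^ p) ^ (1 / p)

section Nearest

variable {V : Type*} [MetricSpace V]

lemma distSet_nonneg (j : V) (F : Finset V) (hF : F.Nonempty) : 0 ≤ distSet j F hF :=
  le_inf' hF _ fun _ _ => dist_nonneg

lemma distSet_le_dist (j : V) {F : Finset V} (hF : F.Nonempty) {f : V} (hf : f ∈ F) :
    distSet j F hF ≤ dist j f :=
  inf'_le _ hf

noncomputable def nearest (j : V) (F : Finset V) (hF : F.Nonempty) : V :=
  (F.exists_mem_eq_inf' hF (dist j)).choose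

lemma nearest_mem (j : V) {F : Finset V} (hF : F.Nonempty) : nearest j F hF ∈ F :=
  (F.exists_mem_eq_inf' hF (dist j)).choose_spec.1

lemma dist_nearest (j : V) {F : Finset V} (hF : F.Nonempty) :
    dist j (nearest j F hF) = distSet j F hF :=
  (F.exists_mem_eq_inf' hF (dist j)).choose_spec.2.symm

lemma dist_nearest_le (j y : V) {F : Finset V} (hF : F.Nonempty) :
    dist j (nearest y F hF) ≤ 2 * dist j y + distSet j F hF :=
  calc dist j (nearest y F hF) ≤ dist j y + dist y (nearest y F hF) := dist_triangle _ _ _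
    _ ≤ dist j y + dist y (nearest j F hF) := by
        rw [dist_nearest]; gcongr; exact distSet_le_dist y hF (nearest_mem j hF)
    _ ≤ dist j y + (dist y j + dist j (nearest j F hF)) := by gcongr; exact dist_triangle _ _ _
    _ = 2 * dist j y + distSet j F hF := by rw [dist_nearest, dist_comm y j]; ring

end Nearest

section Combinatorics

lemma exists_pairwiseDisjoint_subset_card_eq {ι V : Type*} [DecidableEq V] (I : Finset ι)
    (n : ι → ℕ) {T : Finset V} (h : ∑ i ∈ I, n i ≤ T.card) :
    ∃ S : ι → Finset V, (∀ i ∈ I, S i ⊆ T ∧ (S i).card = n i) ∧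
      (I : Set ι).PairwiseDisjoint S := by
  classical
  induction I using Finset.induction_on generalizing T with
  | empty => exact ⟨fun _ => ∅, by simp, by simp⟩
  | insert i I hi ih =>
    rw [sum_insert hi] at h
    obtain ⟨U, hUT, hU⟩ := exists_subset_card_eq (le_of_add_le_left h)
    obtain ⟨S, hS, hdisj⟩ := ih (T := T \ U) (by rw [card_sdiff_of_subset hUT]; omega)
    have hSi : ∀ j ∈ I, Function.update S i U j = S j := fun j hj =>
      Function.update_of_ne (ne_of_mem_of_not_mem hj hi) _ _
    refine ⟨Function.update S i U, fun j hj => ?_, ?_⟩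
    · rcases mem_insert.1 hj with rfl | hj
      · simpa using ⟨hUT, hU⟩
      · rw [hSi j hj]
        exact ⟨(hS j hj).1.trans sdiff_subset, (hS j hj).2⟩
    · rw [coe_insert]
      refine (hdisj.mono_on fun j hj => (hSi j hj).le).insert fun j hj hij => ?_
      rw [Function.update_self, hSi j hj]
      exact disjoint_of_subset_right (hS j hj).1 disjoint_sdiff

lemma sum_add_mul_sum_nonneg_of_forall {α β : Type*} {B : Finset α} {S : Finset β}
    {a : α → ℝ} {w : β → ℝ} {t : ℕ} (ht : 1 ≤ t) (hBt : t < B.card)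
    (hSB : S.card + 1 = B.card) (hw : ∀ x ∈ S, 0 ≤ w x)
    (h : ∀ s ∈ S, ∀ b ∈ B, 0 ≤ a b + w s) :
    0 ≤ ∑ b ∈ B, a b + (1 + 1 / t) * ∑ s ∈ S, w s := by
  have hsum : 0 ≤ S.card * ∑ b ∈ B, a b + B.card * ∑ s ∈ S, w s := by
    have := sum_nonneg fun s hs => sum_nonneg (h s hs)
    simpa [sum_add_distrib, mul_sum] using this
  have hW : 0 ≤ ∑ s ∈ S, w s := sum_nonneg hw
  have ht' : (1 : ℝ) ≤ t := by exact_mod_cast ht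
  have hq : (t : ℝ) + 1 ≤ B.card := by exact_mod_cast hBt
  have hSB' : (S.card : ℝ) + 1 = B.card := by exact_mod_cast hSB
  rw [← hSB'] at hsum hq
  have hS : (0 : ℝ) < S.card := by linarith
  have key : 0 ≤ (t * (S.card * ∑ b ∈ B, a b + (S.card + 1) * ∑ s ∈ S, w s)
      + (S.card - t) * ∑ s ∈ S, w s) / (t * S.card) := by
    apply div_nonneg _ (by positivity)
    nlinarith
  convert key using 1
  field_simp
  ring

end Combinatorics

section Swaps

variable {V : Type*} [DecidableEq V] {F Fstar : Finset V} {η : V → V} {a w : V → ℝ} {t : ℕ}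

lemma sum_add_mul_sum_insert_nonneg (hw : ∀ x ∈ F, 0 ≤ w x) (ht : 1 ≤ t)
    (hswap : ∀ R ⊆ F, ∀ A ⊆ Fstar, A.Nonempty → R.card = A.card → A.card ≤ t →
      (∀ y ∈ Fstar, y ∉ A → η y ∉ R) → 0 ≤ ∑ y ∈ A, a y + ∑ x ∈ R, w x)
    {I S : Finset V} (hI : ∀ y ∈ Fstar, η y ∈ I) {f : V} (hf : f ∈ I) (hIF : I ⊆ F)
    (hS : S ⊆ F \ I) (hSB : S.card + 1 = {y ∈ Fstar | η y = f}.card) :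
    0 ≤ ∑ y ∈ Fstar with η y = f, a y + (1 + 1 / t) * ∑ x ∈ insert f S, w x := by
  set B := {y ∈ Fstar | η y = f}
  have hfS : f ∉ S := fun h => (mem_sdiff.1 (hS h)).2 hf
  have hSF : S ⊆ F := hS.trans sdiff_subset
  have hwfS : 0 ≤ ∑ x ∈ insert f S, w x :=
    sum_nonneg fun x hx => hw x (insert_subset (hIF hf) hSF hx)
  have hlam : (1 : ℝ) ≤ 1 + 1 / t := by simp
  rcases le_or_gt B.card t with hBt | hBt
  · have hfull := hswap (insert f S) (insert_subset (hIF hf) hSF) B (filter_subset _ _)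
      (card_pos.1 (by omega)) (by rw [card_insert_of_notMem hfS, hSB]) hBt
      fun y hy hyB hyR => by
        rcases mem_insert.1 hyR with h | h
        · exact hyB (mem_filter.2 ⟨hy, h⟩)
        · exact (mem_sdiff.1 (hS h)).2 (hI y hy)
    nlinarith
  · have hsingle : ∀ s ∈ S, ∀ b ∈ B, 0 ≤ a b + w s := fun s hs b hb => by
      simpa using hswap {s} (singleton_subset_iff.2 (hSF hs)) {b}
        (singleton_subset_iff.2 (mem_filter.1 hb).1) (singleton_nonempty b) rfl (by simpa)
        fun y hy _ hyR => (mem_singleton.1 hyR ▸ (mem_sdiff.1 (hS hs)).2) (hI y hy)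
    have := sum_add_mul_sum_nonneg_of_forall ht hBt hSB (fun x hx => hw x (hSF hx)) hsingle
    have hmono : ∑ x ∈ S, w x ≤ ∑ x ∈ insert f S, w x := by
      rw [sum_insert hfS]; linarith [hw f (hIF hf)]
    nlinarith

theorem sum_add_mul_sum_nonneg_of_swaps (hcard : Fstar.card ≤ F.card)
    (hη : ∀ y ∈ Fstar, η y ∈ F) (hw : ∀ x ∈ F, 0 ≤ w x) (ht : 1 ≤ t)
    (hswap : ∀ R ⊆ F, ∀ A ⊆ Fstar, A.Nonempty → R.card = A.card → A.card ≤ t →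
      (∀ y ∈ Fstar, y ∉ A → η y ∉ R) → 0 ≤ ∑ y ∈ A, a y + ∑ x ∈ R, w x) :
    0 ≤ ∑ y ∈ Fstar, a y + (1 + 1 / t) * ∑ x ∈ F, w x := by
  set I := Fstar.image η
  have hI : ∀ y ∈ Fstar, η y ∈ I := fun y hy => mem_image_of_mem η hy
  have hIF : I ⊆ F := image_subset_iff.2 hη
  have hfiber : ∀ f ∈ I, 1 ≤ {y ∈ Fstar | η y = f}.card := fun f hf => by
    obtain ⟨y, hy, rfl⟩ := mem_image.1 hf
    exact card_pos.2 ⟨y, mem_filter.2 ⟨hy, rfl⟩⟩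
  obtain ⟨S, hS, hdisj⟩ := exists_pairwiseDisjoint_subset_card_eq I
    (fun f => {y ∈ Fstar | η y = f}.card - 1) (T := F \ I) (by
      have := card_eq_sum_card_fiberwise hI
      have : ∑ f ∈ I, ({y ∈ Fstar | η y = f}.card - 1) + I.card = Fstar.card := by
        rw [card_eq_sum_ones I, ← sum_add_distrib]
        exact (sum_congr rfl fun f hf => Nat.sub_add_cancel (hfiber f hf)).trans this.symm
      rw [card_sdiff_of_subset hIF]
      omega)
  have hdisj' : (I : Set V).PairwiseDisjoint fun f => insert f (S f) := by
    intro f hf g hg hfg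
    simp only [Function.onFun, disjoint_insert_left, disjoint_insert_right, mem_insert, not_or]
    exact ⟨⟨hfg.symm, fun h => (mem_sdiff.1 ((hS f hf).1 h)).2 hg⟩,
      fun h => (mem_sdiff.1 ((hS g hg).1 h)).2 hf, hdisj hf hg hfg⟩
  have hunion : I.biUnion (fun f => insert f (S f)) ⊆ F := biUnion_subset.2 fun f hf =>
    insert_subset (hIF hf) ((hS f hf).1.trans sdiff_subset)
  calc 0 ≤ ∑ f ∈ I, (∑ y ∈ Fstar with η y = f, a y
          + (1 + 1 / t) * ∑ x ∈ insert f (S f), w x) :=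
        sum_nonneg fun f hf => sum_add_mul_sum_insert_nonneg hw ht hswap hI hf hIF (hS f hf).1
          (by rw [(hS f hf).2]; exact Nat.sub_add_cancel (hfiber f hf))
    _ = ∑ y ∈ Fstar, a y + (1 + 1 / t) * ∑ x ∈ I.biUnion (fun f => insert f (S f)), w x := by
        rw [sum_add_distrib, ← mul_sum, sum_biUnion hdisj', sum_fiberwise_of_maps_to hI]
    _ ≤ ∑ y ∈ Fstar, a y + (1 + 1 / t) * ∑ x ∈ F, w x := by
        gcongr
        exact fun x hx _ => hw x hx

end Swaps

section Reassignment

variable {V : Type*} [MetricSpace V] {p : ℝ} {F Fstar : Finset V} (hF : F.Nonempty)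
  (hFstar : Fstar.Nonempty)

noncomputable def openChange (p : ℝ) (j : V) : ℝ :=
  distSet j Fstar hFstar ^ p - distSet j F hF ^ p

noncomputable def rerouteChange (p : ℝ) (j : V) : ℝ :=
  (2 * distSet j Fstar hFstar + distSet j F hF) ^ p - distSet j F hF ^ p

lemma rerouteChange_nonneg (hp : 0 ≤ p) (j : V) : 0 ≤ rerouteChange hF hFstar p j := by
  have := distSet_nonneg j Fstar hFstar
  exact sub_nonneg.2 (Real.rpow_le_rpow (distSet_nonneg j F hF) (by linarith) hp)

variable [DecidableEq V]

/-- A client whose facility is closed and whose optimal facility is not opened goes to the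
facility of `F` nearest to its optimal one, which `hRA` keeps open. -/
lemma distSet_sdiff_union_rpow_le (hp : 0 ≤ p) {R A : Finset V}
    (hRA : ∀ y ∈ Fstar, y ∉ A → nearest y F hF ∉ R) (hne : (F \ R ∪ A).Nonempty) (j : V) :
    distSet j (F \ R ∪ A) hne ^ p ≤ distSet j F hF ^ p
      + (if nearest j Fstar hFstar ∈ A then openChange hF hFstar p j else 0)
      + (if nearest j F hF ∈ R then rerouteChange hF hFstar p j else 0) := by
  have hmono : ∀ {f : V} {r : ℝ}, f ∈ F \ R ∪ A → dist j f ≤ r →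
      distSet j (F \ R ∪ A) hne ^ p ≤ r ^ p := fun hf hr =>
    Real.rpow_le_rpow (distSet_nonneg _ _ _) ((distSet_le_dist j hne hf).trans hr) hp
  have hreroute := rerouteChange_nonneg hF hFstar hp j
  by_cases hA : nearest j Fstar hFstar ∈ A
  · have := hmono (mem_union_right _ hA) (dist_nearest j hFstar).le
    split_ifs <;> simp only [openChange] at * <;> linarith
  by_cases hR : nearest j F hF ∈ R
  · have hkeep : nearest (nearest j Fstar hFstar) F hF ∈ F \ R ∪ A :=
      mem_union_left _ (mem_sdiff.2 ⟨nearest_mem _ hF, hRA _ (nearest_mem j hFstar) hA⟩)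
    have := hmono hkeep
      (by simpa [dist_nearest] using dist_nearest_le j (nearest j Fstar hFstar) hF)
    simp only [hA, hR, if_true, if_false, rerouteChange]
    linarith
  · have := hmono (mem_union_left _ (mem_sdiff.2 ⟨nearest_mem j hF, hR⟩))
      (dist_nearest j hF).le
    simp only [hA, hR, if_false]
    linarith

variable [Fintype V]

lemma sum_distSet_sdiff_union_rpow_le (hp : 0 ≤ p) {R A : Finset V}
    (hRA : ∀ y ∈ Fstar, y ∉ A → nearest y F hF ∉ R) (hne : (F \ R ∪ A).Nonempty) :
    ∑ j, distSet j (F \ R ∪ A) hne ^ p ≤ ∑ j, distSet j F hF ^ p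
      + ∑ y ∈ A, ∑ j with nearest j Fstar hFstar = y, openChange hF hFstar p j
      + ∑ x ∈ R, ∑ j with nearest j F hF = x, rerouteChange hF hFstar p j := by
  rw [sum_fiberwise_eq_sum_filter, sum_fiberwise_eq_sum_filter, sum_filter, sum_filter,
    ← sum_add_distrib, ← sum_add_distrib]
  exact sum_le_sum fun j _ => distSet_sdiff_union_rpow_le hF hFstar hp hRA hne j

end Reassignment

section Numeric

lemma one_add_div_rpow_le_exp {s p : ℝ} (hs : 0 ≤ s) (hp : 0 < p) :
    (1 + s / p) ^ p ≤ Real.exp s :=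
  calc (1 + s / p) ^ p ≤ Real.exp (s / p) ^ p :=
        Real.rpow_le_rpow (by positivity) (by linarith [Real.add_one_le_exp (s / p)]) hp.le
    _ = Real.exp s := by rw [← Real.exp_mul, div_mul_cancel₀ _ hp.ne']

lemma exp_le_quartic_of_le_one {s : ℝ} (h0 : 0 ≤ s) (h1 : s ≤ 1) :
    Real.exp s ≤ 1 + s + s ^ 2 / 2 + s ^ 3 / 6 + 5 * s ^ 4 / 96 := by
  have h := Real.exp_bound' h0 h1 (n := 4) (by norm_num)
  simp only [sum_range_succ, sum_range_zero, Nat.factorial] at h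
  norm_num at h
  linarith

/-- With `s = 2 / (2l + 1)` the first term is at most `(s/4)^2` and the second at most
`l e^s`; the claim then reduces to a polynomial inequality in `s`, using `l s = 1 - s/2`. -/
lemma inv_rpow_add_mul_one_add_rpow_lt {p l : ℝ} (hp : 2 ≤ p) (hl : 1 / 2 ≤ l) :
    (1 / ((2 * l + 1) * p)) ^ p + l * (1 + 2 / ((2 * l + 1) * p)) ^ p < 1 + l := by
  set s := 2 / (2 * l + 1) with hs_def
  have hs : 0 < s := by positivity
  have hs1 : s ≤ 1 := by rw [div_le_one (by linarith)]; linarith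
  have hls : l * s = 1 - s / 2 := by rw [hs_def]; field_simp; ring
  have hfirst : (1 / ((2 * l + 1) * p)) ^ p ≤ (s / 4) ^ 2 := by
    have hc : 1 / ((2 * l + 1) * p) = s / (2 * p) := by rw [hs_def]; field_simp
    have hc1 : s / (2 * p) ≤ s / 4 := div_le_div_of_nonneg_left hs.le (by norm_num) (by linarith)
    rw [hc, ← Real.rpow_two]
    calc (s / (2 * p)) ^ p ≤ (s / (2 * p)) ^ (2 : ℝ) :=
          Real.rpow_le_rpow_of_exponent_ge (by positivity) (by linarith) hp
      _ ≤ (s / 4) ^ (2 : ℝ) := Real.rpow_le_rpow (by positivity) hc1 (by norm_num)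
  have hsecond :
      (1 + 2 / ((2 * l + 1) * p)) ^ p ≤ 1 + s + s ^ 2 / 2 + s ^ 3 / 6 + 5 * s ^ 4 / 96 := by
    have : 2 / ((2 * l + 1) * p) = s / p := by rw [hs_def]; field_simp
    rw [this]
    exact (one_add_div_rpow_le_exp hs.le (by linarith)).trans
      (exp_le_quartic_of_le_one hs.le hs1)
  have hpoly : s * ((s / 4) ^ 2 + l * (1 + s + s ^ 2 / 2 + s ^ 3 / 6 + 5 * s ^ 4 / 96))
      < s * (1 + l) := by
    have e1 : s * ((s / 4) ^ 2 + l * (1 + s + s ^ 2 / 2 + s ^ 3 / 6 + 5 * s ^ 4 / 96))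
        = s * (s / 4) ^ 2 + (l * s) * (1 + s + s ^ 2 / 2 + s ^ 3 / 6 + 5 * s ^ 4 / 96) := by ring
    have e2 : s * (1 + l) = s + l * s := by ring
    rw [e1, e2, hls]
    nlinarith [pow_pos hs 3, pow_pos hs 4, pow_pos hs 5]
  have := lt_of_mul_lt_mul_left hpoly hs.le
  nlinarith

/-- If `D > (2l + 1) p Ds`, dividing the hypothesis by `D^p` contradicts
`inv_rpow_add_mul_one_add_rpow_lt`. -/
lemma le_mul_of_one_add_mul_rpow_le {p l D Ds : ℝ} (hp : 2 ≤ p) (hl : 1 / 2 ≤ l)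
    (hD : 0 ≤ D) (hDs : 0 ≤ Ds) (h : (1 + l) * D ^ p ≤ Ds ^ p + l * (2 * Ds + D) ^ p) :
    D ≤ (2 * l + 1) * p * Ds := by
  set c := (2 * l + 1) * p
  have hc : 0 < c := by positivity
  by_contra! hlt
  have hD0 : 0 < D := (by positivity : 0 ≤ c * Ds).trans_lt hlt
  have hDp : 0 < D ^ p := Real.rpow_pos_of_pos hD0 p
  have hDs' : Ds ≤ 1 / c * D := by rw [one_div_mul_eq_div, le_div_iff₀ hc]; linarith
  have h1 : Ds ^ p ≤ (1 / c) ^ p * D ^ p := by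
    rw [← Real.mul_rpow (by positivity) hD]
    exact Real.rpow_le_rpow hDs hDs' (by linarith)
  have h2 : (2 * Ds + D) ^ p ≤ (1 + 2 / c) ^ p * D ^ p := by
    rw [← Real.mul_rpow (by positivity) hD]
    refine Real.rpow_le_rpow (by positivity) ?_ (by linarith)
    linarith [show (1 + 2 / c) * D = D + 2 * (1 / c * D) by ring]
  have key := mul_lt_mul_of_pos_left (inv_rpow_add_mul_one_add_rpow_lt hp hl) hDp
  nlinarith [mul_le_mul_of_nonneg_left h2 (by linarith : (0 : ℝ) ≤ l)]

end Numeric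

section Cost

variable {V : Type*} [MetricSpace V] [Fintype V] {p : ℝ} {F Fstar : Finset V}

lemma phiP_nonneg (p : ℝ) (F : Finset V) (hF : F.Nonempty) : 0 ≤ phiP p F hF :=
  Real.rpow_nonneg (sum_nonneg fun j _ => Real.rpow_nonneg (distSet_nonneg j F hF) p) _

lemma phiP_rpow (hp : p ≠ 0) (F : Finset V) (hF : F.Nonempty) :
    phiP p F hF ^ p = ∑ j, distSet j F hF ^ p := by
  rw [phiP, one_div, Real.rpow_inv_rpow
    (sum_nonneg fun j _ => Real.rpow_nonneg (distSet_nonneg j F hF) p) hp]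

lemma sum_distSet_rpow_le_of_phiP_le (hp : 0 < p) {G : Finset V} {hF : F.Nonempty}
    {hG : G.Nonempty} (h : phiP p F hF ≤ phiP p G hG) :
    ∑ j, distSet j F hF ^ p ≤ ∑ j, distSet j G hG ^ p := by
  rw [← phiP_rpow hp.ne', ← phiP_rpow hp.ne']
  exact Real.rpow_le_rpow (phiP_nonneg p F hF) h hp.le

lemma sum_two_mul_add_rpow_le (hp : 1 ≤ p) (hF : F.Nonempty) (hFstar : Fstar.Nonempty) :
    ∑ j, (2 * distSet j Fstar hFstar + distSet j F hF) ^ p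
      ≤ (2 * phiP p Fstar hFstar + phiP p F hF) ^ p := by
  have hp0 : 0 < p := by linarith
  have hdouble :
      (∑ j, (2 * distSet j Fstar hFstar) ^ p) ^ (1 / p) = 2 * phiP p Fstar hFstar := by
    simp_rw [Real.mul_rpow zero_le_two (distSet_nonneg _ Fstar hFstar), ← mul_sum]
    rw [Real.mul_rpow (by positivity) (sum_nonneg fun j _ =>
      Real.rpow_nonneg (distSet_nonneg j Fstar hFstar) p), one_div,
      Real.rpow_rpow_inv zero_le_two hp0.ne', ← one_div, phiP]
  have hmink := Real.Lp_add_le_of_nonneg (s := univ) hp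
    (fun j _ => mul_nonneg zero_le_two (distSet_nonneg j Fstar hFstar))
    (fun j _ => distSet_nonneg j F hF)
  rw [hdouble] at hmink
  calc ∑ j, (2 * distSet j Fstar hFstar + distSet j F hF) ^ p
      = ((∑ j, (2 * distSet j Fstar hFstar + distSet j F hF) ^ p) ^ (1 / p)) ^ p := by
        rw [one_div, Real.rpow_inv_rpow (sum_nonneg fun j _ => Real.rpow_nonneg (by
          linarith [distSet_nonneg j F hF, distSet_nonneg j Fstar hFstar]) p) hp0.ne']
    _ ≤ (2 * phiP p Fstar hFstar + phiP p F hF) ^ p :=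
        Real.rpow_le_rpow (Real.rpow_nonneg (sum_nonneg fun j _ => Real.rpow_nonneg (by
          linarith [distSet_nonneg j F hF, distSet_nonneg j Fstar hFstar]) p) _) hmink hp0.le

variable [DecidableEq V]

def IsSwapLocalOpt (p : ℝ) (t : ℕ) (F : Finset V) (hF : F.Nonempty) : Prop :=
  ∀ R ⊆ F, ∀ A : Finset V, R.card = A.card → A.card ≤ t →
    ∀ hne : ((F \ R) ∪ A).Nonempty, phiP p ((F \ R) ∪ A) hne ≥ phiP p F hF

theorem IsSwapLocalOpt.one_add_mul_phiP_rpow_le {t : ℕ} {hF : F.Nonempty}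
    (hloc : IsSwapLocalOpt p t F hF) (hp : 1 ≤ p) (ht : 1 ≤ t) (hFstar : Fstar.Nonempty)
    (hcard : Fstar.card ≤ F.card) :
    (1 + (1 + 1 / t)) * phiP p F hF ^ p
      ≤ phiP p Fstar hFstar ^ p + (1 + 1 / t) * (2 * phiP p Fstar hFstar + phiP p F hF) ^ p := by
  have hp0 : 0 < p := by linarith
  have hsum := sum_add_mul_sum_nonneg_of_swaps hcard (fun y _ => nearest_mem y hF)
    (fun x _ => sum_nonneg fun j _ => rerouteChange_nonneg hF hFstar hp0.le j) ht
    fun R hR A _ hA hRA hAt hkeep => by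
      have hne : (F \ R ∪ A).Nonempty := hA.mono subset_union_right
      have := sum_distSet_rpow_le_of_phiP_le hp0 (hloc R hR A hRA hAt hne)
      have := sum_distSet_sdiff_union_rpow_le hF hFstar hp0.le hkeep hne
      linarith
  rw [sum_fiberwise_of_maps_to fun j _ => nearest_mem j hFstar,
    sum_fiberwise_of_maps_to fun j _ => nearest_mem j hF] at hsum
  simp only [openChange, rerouteChange, sum_sub_distrib, ← phiP_rpow hp0.ne'] at hsum
  have hmink := sum_two_mul_add_rpow_le hp hF hFstar
  have hl : (0 : ℝ) ≤ 1 + 1 / t := by positivity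
  nlinarith [mul_le_mul_of_nonneg_left hmink hl]

end Cost

/-- Approximation guarantees for the `t`-swap local-search algorithm for the
ℓ_p objective: `(3 + 2/t)` for `p = 1`, `(5 + 4/t)` for `p = 2`, and
`(3 + 2/t)·p` for every real `p ≥ 2`. -/
theorem lp_t_swap_local_opt {V : Type*} [MetricSpace V] [Fintype V] [DecidableEq V]
    (p : ℝ) (hp : 1 ≤ p) (t : ℕ) (ht : 1 ≤ t) (k : ℕ)
    (F Fstar : Finset V) (hF : F.Nonempty) (hFstar : Fstar.Nonempty)
    (hcardF : F.card = k) (hcardFstar : Fstar.card = k)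
    (hlocal : ∀ R ⊆ F, ∀ A : Finset V, R.card = A.card → A.card ≤ t →
      ∀ hne : ((F \ R) ∪ A).Nonempty, phiP p ((F \ R) ∪ A) hne ≥ phiP p F hF) :
    (p = 1 → phiP p F hF ≤ (3 + 2 / (t : ℝ)) * phiP p Fstar hFstar) ∧
    (p = 2 → phiP p F hF ≤ (5 + 4 / (t : ℝ)) * phiP p Fstar hFstar) ∧
    (2 ≤ p → phiP p F hF ≤ (3 + 2 / (t : ℝ)) * p * phiP p Fstar hFstar) := by
  have hkey := IsSwapLocalOpt.one_add_mul_phiP_rpow_le hlocal hp ht hFstar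
    (by rw [hcardF, hcardFstar])
  rw [show (3 + 2 / (t : ℝ)) = 2 * (1 + 1 / t) + 1 by ring,
    show (5 + 4 / (t : ℝ)) = 4 * (1 + 1 / t) + 1 by ring]
  set l := 1 + 1 / (t : ℝ)
  have hl : 1 ≤ l := le_add_of_nonneg_right (by positivity)
  have hD := phiP_nonneg p F hF
  have hDs := phiP_nonneg p Fstar hFstar
  refine ⟨fun hp1 => ?_, fun hp2 => ?_, fun hp2 => ?_⟩
  · subst hp1
    simp only [Real.rpow_one] at hkey
    linarith
  · subst hp2
    simp only [Real.rpow_two] at hkey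
    by_contra! hlt
    have : 0 ≤ (4 * l + 1) * phiP 2 Fstar hFstar := by positivity
    nlinarith [mul_pos (sub_pos.2 hlt) (by linarith : 0 < phiP 2 F hF + phiP 2 Fstar hFstar)]
  · exact le_mul_of_one_add_mul_rpow_le hp2 (by linarith) hD hDs hkey
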